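/- arXiv:1906.07519 — 3 statements merged into one kernel-verified Lean document; each statement's English description precedes it below -/
import Mathlib

section
/- Fix an integer n ≥ 2, s ∈ (0,1) and a point ξ = (ξ', ξ_n) ∈ ℝ^n_+. Then the function (y,z) ↦ Γ_s((y,z),ξ) is smooth on ℝ^n × (0,∞), it satisfies the degenerate elliptic equation ∑_{i=1}^n ∂_{y_i}( z^{1−2s} ∂_{y_i} Γ_s((y,z),ξ) ) + ∂_z( z^{1−2s} ∂_z Γ_s((y,z),ξ) ) = 0 at every point (y,z) ∈ ℝ^n × (0,∞), and Γ_s((y,z),ξ) = 0 whenever y_n = 0. -/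
open MeasureTheory Real Set

/-- The last coordinate `y_n` of a point `y ∈ ℝ^n`. -/
noncomputable def lastCoord {n : ℕ} (y : EuclideanSpace ℝ (Fin n)) : ℝ :=
  if h : 0 < n then y ⟨n - 1, Nat.sub_lt h one_pos⟩ else 0

/-- The kernel `Γ_s((y,z),ξ)`. -/
noncomputable def GammaKer (n : ℕ) (s : ℝ) (y : EuclideanSpace ℝ (Fin n)) (z : ℝ)
    (ξ : EuclideanSpace ℝ (Fin n)) : ℝ :=
  z ^ (2 * s) * (‖y - ξ‖ ^ 2 + z ^ 2) ^ (-((n : ℝ) + 2 * s) / 2) *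
    (1 - (1 + 4 * lastCoord y * lastCoord ξ / (‖y - ξ‖ ^ 2 + z ^ 2)) ^ (-((n : ℝ) + 2 * s) / 2))

/-! ### Auxiliary definitions -/

/-- The single-pole kernel `z^{2s} (|y-c|^2+z^2)^{-(n+2s)/2}`. -/
noncomputable def Fker (n : ℕ) (s : ℝ) (c : EuclideanSpace ℝ (Fin n))
    (q : EuclideanSpace ℝ (Fin n) × ℝ) : ℝ :=
  q.2 ^ (2 * s) * (‖q.1 - c‖ ^ 2 + q.2 ^ 2) ^ (-((n : ℝ) + 2 * s) / 2)

/-- Reflection of a point across the hyperplane `x_n = 0`. -/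
noncomputable def reflPt (n : ℕ) (ξ : EuclideanSpace ℝ (Fin n)) : EuclideanSpace ℝ (Fin n) :=
  (WithLp.equiv 2 _).symm (fun i : Fin n => if (i : ℕ) = n - 1 then -ξ i else ξ i)

/-- `z^{1-2s} ∂_{y_i} Fker`, simplified. -/
noncomputable def psiX (n : ℕ) (s : ℝ) (c : EuclideanSpace ℝ (Fin n)) (i : Fin n)
    (q : EuclideanSpace ℝ (Fin n) × ℝ) : ℝ :=
  (-((n : ℝ) + 2 * s)) * (q.2 * ((q.1 i - c i) *
    (‖q.1 - c‖ ^ 2 + q.2 ^ 2) ^ (-((n : ℝ) + 2 * s) / 2 - 1)))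

/-- `z^{1-2s} ∂_z Fker`, simplified. -/
noncomputable def psiZ (n : ℕ) (s : ℝ) (c : EuclideanSpace ℝ (Fin n))
    (q : EuclideanSpace ℝ (Fin n) × ℝ) : ℝ :=
  2 * s * (‖q.1 - c‖ ^ 2 + q.2 ^ 2) ^ (-((n : ℝ) + 2 * s) / 2) -
    ((n : ℝ) + 2 * s) * (q.2 ^ 2 *
      (‖q.1 - c‖ ^ 2 + q.2 ^ 2) ^ (-((n : ℝ) + 2 * s) / 2 - 1))

/-! ### Elementary facts -/

lemma normsq_eq {n : ℕ} (x : EuclideanSpace ℝ (Fin n)) : ‖x‖ ^ 2 = ∑ i, x i ^ 2 := by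
  rw [EuclideanSpace.norm_eq, Real.sq_sqrt (by positivity)]
  simp [sq_abs]

lemma reflPt_apply {n : ℕ} (ξ : EuclideanSpace ℝ (Fin n)) (i : Fin n) :
    reflPt n ξ i = if (i : ℕ) = n - 1 then -ξ i else ξ i := rfl

lemma lastCoord_eq {n : ℕ} (h : 0 < n) (y : EuclideanSpace ℝ (Fin n)) :
    lastCoord y = y ⟨n - 1, Nat.sub_lt h one_pos⟩ := dif_pos h

lemma norm_sub_reflPt {n : ℕ} (hn : 0 < n) (y ξ : EuclideanSpace ℝ (Fin n)) :
    ‖y - reflPt n ξ‖ ^ 2 = ‖y - ξ‖ ^ 2 + 4 * lastCoord y * lastCoord ξ := by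
  set k : Fin n := ⟨n - 1, Nat.sub_lt hn one_pos⟩ with hk
  rw [normsq_eq, normsq_eq, lastCoord_eq hn, lastCoord_eq hn]
  have h1 : ∀ i : Fin n, (y - reflPt n ξ) i ^ 2 =
      (y - ξ) i ^ 2 + (if i = k then 4 * y k * ξ k else 0) := by
    intro i
    by_cases hik : i = k
    · subst hik
      simp only [PiLp.sub_apply, reflPt_apply, hk, if_true, if_pos trivial]
      ring
    · have : (i : ℕ) ≠ n - 1 := by
        intro h; exact hik (Fin.ext h)
      simp [PiLp.sub_apply, reflPt_apply, this, hik]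
  simp only [h1]
  rw [Finset.sum_add_distrib, Finset.sum_ite_eq' Finset.univ k]
  simp [hk]

lemma gammaKer_split {n : ℕ} (hn : 0 < n) (s : ℝ) (ξ : EuclideanSpace ℝ (Fin n))
    (y : EuclideanSpace ℝ (Fin n)) (z : ℝ) (hz : z ≠ 0) :
    GammaKer n s y z ξ = Fker n s ξ (y, z) - Fker n s (reflPt n ξ) (y, z) := by
  have hA : (0:ℝ) < ‖y - ξ‖ ^ 2 + z ^ 2 := by positivity
  have hA' : (0:ℝ) ≤ ‖y - reflPt n ξ‖ ^ 2 + z ^ 2 := by positivity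
  set A : ℝ := ‖y - ξ‖ ^ 2 + z ^ 2 with hAdef
  set A' : ℝ := ‖y - reflPt n ξ‖ ^ 2 + z ^ 2 with hA'def
  have key : A' = A + 4 * lastCoord y * lastCoord ξ := by
    rw [hA'def, hAdef, norm_sub_reflPt hn]; ring
  have hB : 1 + 4 * lastCoord y * lastCoord ξ / A = A' / A := by
    field_simp [key]
    linarith
  set α : ℝ := -((n : ℝ) + 2 * s) / 2 with hα
  have hmul : A ^ α * (A' / A) ^ α = A' ^ α := by
    rw [← Real.mul_rpow hA.le (by positivity)]
    rw [mul_div_cancel₀ _ hA.ne']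
  unfold GammaKer Fker
  simp only [← hAdef, ← hα, hB]
  have : A ^ α * (1 - (A' / A) ^ α) = A ^ α - A' ^ α := by
    rw [mul_sub, mul_one, hmul]
  rw [mul_assoc, this]
  simp only [hA'def]
  ring

/-! ### Derivative computations -/

lemma Qpos {n : ℕ} (c : EuclideanSpace ℝ (Fin n)) (q : EuclideanSpace ℝ (Fin n) × ℝ)
    (hq : q.2 ≠ 0) : (0:ℝ) < ‖q.1 - c‖ ^ 2 + q.2 ^ 2 :=
  add_pos_of_nonneg_of_pos (sq_nonneg _) (pow_two_pos_of_ne_zero hq)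

lemma hasFDerivAt_sq2 {n : ℕ} (q : EuclideanSpace ℝ (Fin n) × ℝ) :
    HasFDerivAt (fun q : EuclideanSpace ℝ (Fin n) × ℝ => q.2 ^ 2)
      ((2 * q.2) • (ContinuousLinearMap.snd ℝ (EuclideanSpace ℝ (Fin n)) ℝ)) q := by
  have h := (hasFDerivAt_snd (𝕜 := ℝ) (p := q)).mul (hasFDerivAt_snd (𝕜 := ℝ) (p := q))
  have hf : (fun q : EuclideanSpace ℝ (Fin n) × ℝ => q.2 ^ 2) =
      fun q : EuclideanSpace ℝ (Fin n) × ℝ => q.2 * q.2 := by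
    funext q; rw [sq]
  rw [hf, two_mul, add_smul]
  exact h

lemma hasFDerivAt_Qfun {n : ℕ} (c : EuclideanSpace ℝ (Fin n))
    (q : EuclideanSpace ℝ (Fin n) × ℝ) :
    HasFDerivAt (fun q : EuclideanSpace ℝ (Fin n) × ℝ => ‖q.1 - c‖ ^ 2 + q.2 ^ 2)
      (2 • ((innerSL ℝ (q.1 - c)).comp (ContinuousLinearMap.fst ℝ _ ℝ)) +
        (2 * q.2) • (ContinuousLinearMap.snd ℝ _ ℝ)) q := by
  have h1 : HasFDerivAt (fun q : EuclideanSpace ℝ (Fin n) × ℝ => ‖q.1 - c‖ ^ 2)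
      (2 • ((innerSL ℝ (q.1 - c)).comp (ContinuousLinearMap.fst ℝ _ ℝ))) q :=
    ((hasFDerivAt_fst (p := q)).sub_const c).norm_sq
  exact h1.add (hasFDerivAt_sq2 q)

lemma hasFDerivAt_Fker {n : ℕ} (s : ℝ) (c : EuclideanSpace ℝ (Fin n))
    (q : EuclideanSpace ℝ (Fin n) × ℝ) (hq : q.2 ≠ 0) :
    HasFDerivAt (Fker n s c)
      ((q.2 ^ (2*s)) • ((-((n:ℝ)+2*s)/2 * (‖q.1 - c‖^2 + q.2^2) ^ (-((n:ℝ)+2*s)/2 - 1)) •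
          (2 • ((innerSL ℝ (q.1 - c)).comp (ContinuousLinearMap.fst ℝ _ ℝ)) +
            (2*q.2) • (ContinuousLinearMap.snd ℝ _ ℝ))) +
        ((‖q.1 - c‖^2 + q.2^2) ^ (-((n:ℝ)+2*s)/2)) •
          ((2*s*q.2^(2*s-1)) • (ContinuousLinearMap.snd ℝ (EuclideanSpace ℝ (Fin n)) ℝ))) q := by
  have h1 : HasFDerivAt (fun q : EuclideanSpace ℝ (Fin n) × ℝ => q.2 ^ (2*s))
      ((2*s*q.2^(2*s-1)) • (ContinuousLinearMap.snd ℝ (EuclideanSpace ℝ (Fin n)) ℝ)) q :=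
    (hasFDerivAt_snd (𝕜 := ℝ) (p := q)).rpow_const (Or.inl hq)
  have h2 := (hasFDerivAt_Qfun c q).rpow_const (p := -((n:ℝ)+2*s)/2) (Or.inl (Qpos c q hq).ne')
  exact h1.mul h2

lemma contDiffAt_Fker {n : ℕ} (s : ℝ) (c : EuclideanSpace ℝ (Fin n))
    (q : EuclideanSpace ℝ (Fin n) × ℝ) (hq : q.2 ≠ 0) :
    ContDiffAt ℝ (⊤ : ℕ∞) (Fker n s c) q := by
  have h1 : ContDiffAt ℝ (⊤ : ℕ∞) (fun q : EuclideanSpace ℝ (Fin n) × ℝ => q.2 ^ (2*s)) q :=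
    (contDiffAt_rpow_const_of_ne (p := 2*s) hq).comp q contDiffAt_snd
  have hQ : ContDiff ℝ (⊤ : ℕ∞) (fun q : EuclideanSpace ℝ (Fin n) × ℝ => ‖q.1 - c‖^2 + q.2^2) :=
    ((contDiff_norm_sq (𝕜 := ℝ)).comp (contDiff_fst.sub contDiff_const)).add
      (contDiff_snd.pow 2)
  have h3 : ContDiffAt ℝ (⊤ : ℕ∞)
      (fun q : EuclideanSpace ℝ (Fin n) × ℝ => (‖q.1 - c‖^2 + q.2^2) ^ (-((n:ℝ)+2*s)/2)) q :=
    hQ.contDiffAt.rpow_const_of_ne (Qpos c q hq).ne'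
  exact h1.mul h3

lemma inner_x_eq {n : ℕ} (s : ℝ) (c : EuclideanSpace ℝ (Fin n))
    (q : EuclideanSpace ℝ (Fin n) × ℝ) (hq : 0 < q.2) (i : Fin n) :
    q.2 ^ (1 - 2*s) * fderiv ℝ (Fker n s c) q (EuclideanSpace.single i 1, 0) = psiX n s c i q := by
  rw [(hasFDerivAt_Fker s c q hq.ne').fderiv]
  simp only [ContinuousLinearMap.add_apply, ContinuousLinearMap.smul_apply,
    ContinuousLinearMap.comp_apply, ContinuousLinearMap.coe_fst', ContinuousLinearMap.coe_snd',
    innerSL_apply_apply, smul_eq_mul, nsmul_eq_mul, Nat.cast_ofNat]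
  simp only [EuclideanSpace.inner_single_right, conj_trivial, PiLp.sub_apply, mul_zero,
    add_zero, zero_add, one_mul, mul_one]
  unfold psiX
  have hz : q.2 ^ (1-2*s) * q.2 ^ (2*s) = q.2 := by
    rw [← Real.rpow_add hq]; norm_num
  set Q1 := (‖q.1 - c‖ ^ 2 + q.2 ^ 2) ^ (-((n:ℝ) + 2 * s) / 2 - 1)
  linear_combination (-((n:ℝ) + 2 * s) / 2 * Q1 * (2 * (q.1 i - c i))) * hz

lemma inner_z_eq {n : ℕ} (s : ℝ) (c : EuclideanSpace ℝ (Fin n))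
    (q : EuclideanSpace ℝ (Fin n) × ℝ) (hq : 0 < q.2) :
    q.2 ^ (1 - 2*s) * fderiv ℝ (Fker n s c) q (0, 1) = psiZ n s c q := by
  rw [(hasFDerivAt_Fker s c q hq.ne').fderiv]
  simp only [ContinuousLinearMap.add_apply, ContinuousLinearMap.smul_apply,
    ContinuousLinearMap.comp_apply, ContinuousLinearMap.coe_fst', ContinuousLinearMap.coe_snd',
    innerSL_apply_apply, smul_eq_mul, nsmul_eq_mul, Nat.cast_ofNat]
  simp only [inner_zero_right, mul_zero, add_zero, zero_add, one_mul, mul_one]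
  unfold psiZ
  have hz : q.2 ^ (1-2*s) * q.2 ^ (2*s) = q.2 := by
    rw [← Real.rpow_add hq]; norm_num
  have hz0 : q.2 ^ (1-2*s) * q.2 ^ (2*s-1) = 1 := by
    rw [← Real.rpow_add hq]; norm_num
  set Q1 := (‖q.1 - c‖ ^ 2 + q.2 ^ 2) ^ (-((n:ℝ) + 2 * s) / 2 - 1)
  set Q0 := (‖q.1 - c‖ ^ 2 + q.2 ^ 2) ^ (-((n:ℝ) + 2 * s) / 2)
  linear_combination (-((n:ℝ) + 2 * s) / 2 * Q1 * (2 * q.2)) * hz + (2*s*Q0) * hz0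

lemma hasFDerivAt_coord {n : ℕ} (i : Fin n) (c : EuclideanSpace ℝ (Fin n))
    (q : EuclideanSpace ℝ (Fin n) × ℝ) :
    HasFDerivAt (fun q : EuclideanSpace ℝ (Fin n) × ℝ => q.1 i - c i)
      ((EuclideanSpace.proj i).comp (ContinuousLinearMap.fst ℝ (EuclideanSpace ℝ (Fin n)) ℝ)) q := by
  have h := (((EuclideanSpace.proj i).comp
      (ContinuousLinearMap.fst ℝ (EuclideanSpace ℝ (Fin n)) ℝ)).hasFDerivAt (x := q)).sub_const (c i)
  exact h

lemma psiX_deriv {n : ℕ} (s : ℝ) (c : EuclideanSpace ℝ (Fin n)) (i : Fin n)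
    (q : EuclideanSpace ℝ (Fin n) × ℝ) (hq : q.2 ≠ 0) :
    DifferentiableAt ℝ (psiX n s c i) q ∧
    fderiv ℝ (psiX n s c i) q (EuclideanSpace.single i 1, 0) =
      (-((n:ℝ)+2*s)) * (q.2 * ((q.1 i - c i) *
        ((-((n:ℝ)+2*s)/2 - 1) * (‖q.1 - c‖^2+q.2^2) ^ (-((n:ℝ)+2*s)/2 - 1 - 1) *
          (2 * (q.1 i - c i))) +
        (‖q.1 - c‖^2+q.2^2) ^ (-((n:ℝ)+2*s)/2 - 1))) := by
  have hQ1 := (hasFDerivAt_Qfun c q).rpow_const (p := -((n:ℝ)+2*s)/2 - 1)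
    (Or.inl (Qpos c q hq).ne')
  have hg := (hasFDerivAt_coord i c q).mul hQ1
  have h := ((hasFDerivAt_snd (𝕜 := ℝ) (p := q)).mul hg).const_mul (-((n:ℝ)+2*s))
  have hpsi : HasFDerivAt (psiX n s c i) _ q := h
  refine ⟨hpsi.differentiableAt, ?_⟩
  rw [hpsi.fderiv]
  simp only [ContinuousLinearMap.add_apply, ContinuousLinearMap.smul_apply,
    ContinuousLinearMap.comp_apply, ContinuousLinearMap.coe_fst', ContinuousLinearMap.coe_snd',
    innerSL_apply_apply, smul_eq_mul, nsmul_eq_mul, Nat.cast_ofNat,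
    EuclideanSpace.inner_single_right, conj_trivial, PiLp.sub_apply,
    PiLp.proj_apply, EuclideanSpace.single_apply, if_pos rfl,
    mul_zero, add_zero, zero_add, one_mul, mul_one]
  norm_num

lemma psiZ_deriv {n : ℕ} (s : ℝ) (c : EuclideanSpace ℝ (Fin n))
    (q : EuclideanSpace ℝ (Fin n) × ℝ) (hq : q.2 ≠ 0) :
    DifferentiableAt ℝ (psiZ n s c) q ∧
    fderiv ℝ (psiZ n s c) q (0, 1) =
      2 * s * ((-((n:ℝ)+2*s)/2) * (‖q.1 - c‖^2+q.2^2) ^ (-((n:ℝ)+2*s)/2 - 1) * (2*q.2)) -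
      ((n:ℝ)+2*s) * (q.2^2 * ((-((n:ℝ)+2*s)/2 - 1) *
          (‖q.1 - c‖^2+q.2^2) ^ (-((n:ℝ)+2*s)/2 - 1 - 1) * (2*q.2)) +
        (‖q.1 - c‖^2+q.2^2) ^ (-((n:ℝ)+2*s)/2 - 1) * (2*q.2)) := by
  have hQ0 := (hasFDerivAt_Qfun c q).rpow_const (p := -((n:ℝ)+2*s)/2)
    (Or.inl (Qpos c q hq).ne')
  have hQ1 := (hasFDerivAt_Qfun c q).rpow_const (p := -((n:ℝ)+2*s)/2 - 1)
    (Or.inl (Qpos c q hq).ne')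
  have ha := hQ0.const_mul (2*s)
  have hb := ((hasFDerivAt_sq2 q).mul hQ1).const_mul ((n:ℝ)+2*s)
  have hpsi : HasFDerivAt (psiZ n s c) _ q := ha.sub hb
  refine ⟨hpsi.differentiableAt, ?_⟩
  rw [hpsi.fderiv]
  simp only [ContinuousLinearMap.sub_apply, ContinuousLinearMap.add_apply,
    ContinuousLinearMap.smul_apply, ContinuousLinearMap.comp_apply,
    ContinuousLinearMap.coe_fst', ContinuousLinearMap.coe_snd',
    innerSL_apply_apply, smul_eq_mul, nsmul_eq_mul, Nat.cast_ofNat,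
    inner_zero_right, mul_zero, add_zero, zero_add, one_mul, mul_one]

/-- The PDE for a single-pole kernel. -/
lemma pde_single {n : ℕ} (s : ℝ) (c : EuclideanSpace ℝ (Fin n))
    (p : EuclideanSpace ℝ (Fin n) × ℝ) (hp : 0 < p.2) :
    (∑ i : Fin n, fderiv ℝ (psiX n s c i) p (EuclideanSpace.single i 1, 0)) +
      fderiv ℝ (psiZ n s c) p (0, 1) = 0 := by
  rw [Finset.sum_congr rfl fun i _ => (psiX_deriv s c i p hp.ne').2,
    (psiZ_deriv s c p hp.ne').2]
  have hQpos : (0:ℝ) < ‖p.1 - c‖^2 + p.2^2 := by positivity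
  set M : ℝ := ‖p.1 - c‖^2 with hM
  set Q : ℝ := M + p.2^2 with hQ
  set a : ℝ := Q ^ (-((n:ℝ)+2*s)/2 - 1 - 1) with ha
  have e1 : Q ^ (-((n:ℝ)+2*s)/2 - 1) = Q * a := by
    have h := Real.rpow_add hQpos 1 (-((n:ℝ)+2*s)/2 - 1 - 1)
    rw [Real.rpow_one] at h
    rw [ha, ← h]
    congr 1
    ring
  have hN : ∑ i : Fin n, (p.1 i - c i)^2 = M := by
    rw [hM, normsq_eq]
    simp
  have hstep : ∀ i : Fin n, (-((n:ℝ)+2*s)) * (p.2 * ((p.1 i - c i) *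
        ((-((n:ℝ)+2*s)/2 - 1) * a * (2 * (p.1 i - c i))) + Q * a)) =
      ((-((n:ℝ)+2*s)) * p.2 * ((-((n:ℝ)+2*s)/2 - 1) * a * 2)) * (p.1 i - c i)^2 +
        (-((n:ℝ)+2*s)) * p.2 * Q * a := fun i => by ring
  rw [e1]
  rw [Finset.sum_congr rfl fun i _ => hstep i, Finset.sum_add_distrib, ← Finset.mul_sum, hN,
    Finset.sum_const, Finset.card_univ, Fintype.card_fin, nsmul_eq_mul]
  ring

theorem stmt0 (n : ℕ) (hn : 2 ≤ n) (s : ℝ) (hs0 : 0 < s) (hs1 : s < 1)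
    (ξ : EuclideanSpace ℝ (Fin n)) (hξ : 0 < lastCoord ξ) :
    ContDiffOn ℝ (⊤ : ℕ∞) (fun p : EuclideanSpace ℝ (Fin n) × ℝ => GammaKer n s p.1 p.2 ξ)
      {p : EuclideanSpace ℝ (Fin n) × ℝ | 0 < p.2} ∧
    (∀ p : EuclideanSpace ℝ (Fin n) × ℝ, 0 < p.2 →
      (∑ i : Fin n,
        fderiv ℝ (fun q : EuclideanSpace ℝ (Fin n) × ℝ =>
            q.2 ^ (1 - 2 * s) *
              fderiv ℝ (fun r : EuclideanSpace ℝ (Fin n) × ℝ => GammaKer n s r.1 r.2 ξ) q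
                (EuclideanSpace.single i 1, 0)) p (EuclideanSpace.single i 1, 0)) +
      fderiv ℝ (fun q : EuclideanSpace ℝ (Fin n) × ℝ =>
          q.2 ^ (1 - 2 * s) *
            fderiv ℝ (fun r : EuclideanSpace ℝ (Fin n) × ℝ => GammaKer n s r.1 r.2 ξ) q
              (0, 1)) p (0, 1) = 0) ∧
    (∀ (y : EuclideanSpace ℝ (Fin n)) (z : ℝ), 0 < z → lastCoord y = 0 →
      GammaKer n s y z ξ = 0) := by
  have hn0 : 0 < n := by omega
  set rξ := reflPt n ξ with hrξ
  have hSopen : IsOpen {q : EuclideanSpace ℝ (Fin n) × ℝ | 0 < q.2} :=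
    isOpen_lt continuous_const continuous_snd
  have hsplitS : ∀ q : EuclideanSpace ℝ (Fin n) × ℝ, 0 < q.2 →
      GammaKer n s q.1 q.2 ξ = Fker n s ξ q - Fker n s rξ q := fun q hq =>
    gammaKer_split hn0 s ξ q.1 q.2 hq.ne'
  have hdF : ∀ (c : EuclideanSpace ℝ (Fin n)) (q : EuclideanSpace ℝ (Fin n) × ℝ), 0 < q.2 →
      DifferentiableAt ℝ (Fker n s c) q := fun c q hq =>
    (contDiffAt_Fker s c q hq.ne').differentiableAt (by simp)
  refine ⟨?_, ?_, ?_⟩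
  · -- smoothness
    apply ContDiffOn.congr (f := fun q => Fker n s ξ q - Fker n s rξ q)
    · exact fun q hq =>
        ((contDiffAt_Fker s ξ q (ne_of_gt hq)).sub
          (contDiffAt_Fker s rξ q (ne_of_gt hq))).contDiffWithinAt
    · intro q hq
      exact hsplitS q hq
  · -- the PDE
    intro p hp
    have hmem : {q : EuclideanSpace ℝ (Fin n) × ℝ | 0 < q.2} ∈ nhds p := hSopen.mem_nhds hp
    have hfderiv_eq : ∀ q : EuclideanSpace ℝ (Fin n) × ℝ, 0 < q.2 →
        fderiv ℝ (fun r : EuclideanSpace ℝ (Fin n) × ℝ => GammaKer n s r.1 r.2 ξ) q =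
          fderiv ℝ (fun r => Fker n s ξ r - Fker n s rξ r) q := by
      intro q hq
      apply Filter.EventuallyEq.fderiv_eq
      filter_upwards [hSopen.mem_nhds hq] with r hr
      exact hsplitS r hr
    have hkeyX : ∀ i : Fin n,
        fderiv ℝ (fun q : EuclideanSpace ℝ (Fin n) × ℝ =>
            q.2 ^ (1 - 2 * s) *
              fderiv ℝ (fun r : EuclideanSpace ℝ (Fin n) × ℝ => GammaKer n s r.1 r.2 ξ) q
                (EuclideanSpace.single i 1, 0)) p (EuclideanSpace.single i 1, 0) =
          fderiv ℝ (psiX n s ξ i) p (EuclideanSpace.single i 1, 0) -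
            fderiv ℝ (psiX n s rξ i) p (EuclideanSpace.single i 1, 0) := by
      intro i
      have hev : (fun q : EuclideanSpace ℝ (Fin n) × ℝ =>
          q.2 ^ (1 - 2 * s) *
            fderiv ℝ (fun r : EuclideanSpace ℝ (Fin n) × ℝ => GammaKer n s r.1 r.2 ξ) q
              (EuclideanSpace.single i 1, 0)) =ᶠ[nhds p]
          (fun q => psiX n s ξ i q - psiX n s rξ i q) := by
        filter_upwards [hmem] with q hq
        rw [hfderiv_eq q hq, fderiv_fun_sub (hdF ξ q hq) (hdF rξ q hq),
          ContinuousLinearMap.sub_apply, mul_sub, inner_x_eq s ξ q hq i,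
          inner_x_eq s rξ q hq i]
      rw [hev.fderiv_eq, fderiv_fun_sub (psiX_deriv s ξ i p hp.ne').1
        (psiX_deriv s rξ i p hp.ne').1, ContinuousLinearMap.sub_apply]
    have hkeyZ :
        fderiv ℝ (fun q : EuclideanSpace ℝ (Fin n) × ℝ =>
            q.2 ^ (1 - 2 * s) *
              fderiv ℝ (fun r : EuclideanSpace ℝ (Fin n) × ℝ => GammaKer n s r.1 r.2 ξ) q
                (0, 1)) p (0, 1) =
          fderiv ℝ (psiZ n s ξ) p (0, 1) - fderiv ℝ (psiZ n s rξ) p (0, 1) := by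
      have hev : (fun q : EuclideanSpace ℝ (Fin n) × ℝ =>
          q.2 ^ (1 - 2 * s) *
            fderiv ℝ (fun r : EuclideanSpace ℝ (Fin n) × ℝ => GammaKer n s r.1 r.2 ξ) q
              (0, 1)) =ᶠ[nhds p] (fun q => psiZ n s ξ q - psiZ n s rξ q) := by
        filter_upwards [hmem] with q hq
        rw [hfderiv_eq q hq, fderiv_fun_sub (hdF ξ q hq) (hdF rξ q hq),
          ContinuousLinearMap.sub_apply, mul_sub, inner_z_eq s ξ q hq, inner_z_eq s rξ q hq]
      rw [hev.fderiv_eq, fderiv_fun_sub (psiZ_deriv s ξ p hp.ne').1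
        (psiZ_deriv s rξ p hp.ne').1, ContinuousLinearMap.sub_apply]
    rw [Finset.sum_congr rfl fun i _ => hkeyX i, hkeyZ, Finset.sum_sub_distrib]
    have h1 := pde_single s ξ p hp
    have h2 := pde_single s rξ p hp
    linarith
  · -- boundary values
    intro y z hz hy
    unfold GammaKer
    rw [hy]
    norm_num
end

section
/- Let n ≥ 2 be an integer and s ∈ (0,1). There exists a constant C = C(n,s) > 0 such that for every 𝔟 ∈ [0,1], every y, ξ ∈ ℝ^n_+ and every z > 0, one has Γ_s((y,z),ξ) ≤ C · y_n^𝔟 · ξ_n^𝔟 · z^{2s} · (|y−ξ|² + z²)^{−(n+2s+2𝔟)/2}. -/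
open MeasureTheory Real Set

/-!
With `D = |y - ξ|² + z²`, `t = 4 y_n ξ_n / D` and `p = (n + 2s)/2 ≥ 1`, the kernel is
`z^{2s} D^{-p} (1 - (1 + t)^{-p})`. The last factor is at most `1` and, since
`(1 + t)^{-p} ≥ e^{-pt} ≥ 1 - pt`, at most `pt`; hence it is at most
`min 1 (pt) ≤ (pt)^𝔟 ≤ 4p (y_n ξ_n / D)^𝔟`, which trades the factor for `y_n^𝔟 ξ_n^𝔟 D^{-𝔟}`.
-/

lemma one_sub_one_add_rpow_neg_le_mul {t p : ℝ} (ht : -1 < t) (hp : 0 ≤ p) :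
    1 - (1 + t) ^ (-p) ≤ p * t := by
  have hexp : exp (-(p * t)) ≤ (1 + t) ^ (-p) := by
    calc exp (-(p * t)) = exp t ^ (-p) := by rw [← exp_mul]; ring_nf
      _ ≤ (1 + t) ^ (-p) :=
        rpow_le_rpow_of_nonpos (by linarith) (by linarith [add_one_le_exp t]) (by linarith)
  linarith [add_one_le_exp (-(p * t))]

lemma min_one_le_rpow {x b : ℝ} (hx : 0 ≤ x) (hb0 : 0 ≤ b) (hb1 : b ≤ 1) :
    min 1 x ≤ x ^ b := by
  rcases le_total x 1 with h | h
  · calc min 1 x ≤ x := min_le_right _ _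
      _ = x ^ (1 : ℝ) := (rpow_one x).symm
      _ ≤ x ^ b := rpow_le_rpow_of_exponent_ge' hx h hb0 hb1
  · exact (min_le_left _ _).trans (one_le_rpow h hb0)

lemma one_sub_one_add_rpow_neg_le_rpow {t p b : ℝ} (ht : 0 ≤ t) (hp : 0 ≤ p)
    (hb0 : 0 ≤ b) (hb1 : b ≤ 1) :
    1 - (1 + t) ^ (-p) ≤ (p * t) ^ b := by
  have hle_one : 1 - (1 + t) ^ (-p) ≤ 1 := by
    linarith [rpow_nonneg (by linarith : (0 : ℝ) ≤ 1 + t) (-p)]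
  calc 1 - (1 + t) ^ (-p) ≤ min 1 (p * t) :=
        le_min hle_one (one_sub_one_add_rpow_neg_le_mul (by linarith) hp)
    _ ≤ (p * t) ^ b := min_one_le_rpow (by positivity) hb0 hb1

lemma one_sub_one_add_four_mul_div_rpow_neg_le {a c D p b : ℝ} (ha : 0 ≤ a) (hc : 0 ≤ c)
    (hD : 0 < D) (hp : 1 ≤ 4 * p) (hb0 : 0 ≤ b) (hb1 : b ≤ 1) :
    1 - (1 + 4 * a * c / D) ^ (-p) ≤ 4 * p * (a ^ b * c ^ b * D ^ (-b)) := by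
  calc 1 - (1 + 4 * a * c / D) ^ (-p) ≤ (4 * p * (a * c / D)) ^ b := by
        convert one_sub_one_add_rpow_neg_le_rpow (t := 4 * a * c / D) (p := p) (by positivity)
          (by linarith) hb0 hb1 using 2
        ring
    _ = (4 * p) ^ b * (a ^ b * c ^ b * D ^ (-b)) := by
        rw [mul_rpow (by linarith) (by positivity), div_rpow (by positivity) hD.le,
          mul_rpow ha hc, rpow_neg hD.le, div_eq_mul_inv]
    _ ≤ 4 * p * (a ^ b * c ^ b * D ^ (-b)) := by
        gcongr
        exact rpow_le_self_of_one_le hp hb1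

theorem stmt3_general (n : ℕ) (hn : 2 ≤ n) (s : ℝ) (hs0 : 0 < s) :
    ∃ C > (0 : ℝ), ∀ b ∈ Set.Icc (0 : ℝ) 1, ∀ y ξ : EuclideanSpace ℝ (Fin n),
      0 < lastCoord y → 0 < lastCoord ξ → ∀ z : ℝ, 0 < z →
        GammaKer n s y z ξ ≤
          C * lastCoord y ^ b * lastCoord ξ ^ b * z ^ (2 * s) *
            (‖y - ξ‖ ^ 2 + z ^ 2) ^ (-((n : ℝ) + 2 * s + 2 * b) / 2) := by
  set p : ℝ := ((n : ℝ) + 2 * s) / 2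
  have hp : 1 ≤ p := by
    have : (2 : ℝ) ≤ n := by exact_mod_cast hn
    simp only [p]
    linarith
  refine ⟨4 * p, by linarith, ?_⟩
  rintro b ⟨hb0, hb1⟩ y ξ hy hξ z hz
  set D : ℝ := ‖y - ξ‖ ^ 2 + z ^ 2
  have hD : 0 < D := by positivity
  have hexp : -((n : ℝ) + 2 * s) / 2 = -p := by ring
  calc GammaKer n s y z ξ
      = z ^ (2 * s) * D ^ (-p) * (1 - (1 + 4 * lastCoord y * lastCoord ξ / D) ^ (-p)) := by
        rw [GammaKer, hexp]
    _ ≤ z ^ (2 * s) * D ^ (-p) *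
          (4 * p * (lastCoord y ^ b * lastCoord ξ ^ b * D ^ (-b))) := by
        gcongr
        exact one_sub_one_add_four_mul_div_rpow_neg_le hy.le hξ.le hD (by linarith) hb0 hb1
    _ = 4 * p * lastCoord y ^ b * lastCoord ξ ^ b * z ^ (2 * s) * D ^ (-p + -b) := by
        rw [rpow_add hD]; ring
    _ = _ := by congr 2; ring

theorem stmt3 (n : ℕ) (hn : 2 ≤ n) (s : ℝ) (hs0 : 0 < s) (hs1 : s < 1) :
    ∃ C > (0 : ℝ), ∀ b ∈ Set.Icc (0 : ℝ) 1, ∀ y ξ : EuclideanSpace ℝ (Fin n),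
      0 < lastCoord y → 0 < lastCoord ξ → ∀ z : ℝ, 0 < z →
        GammaKer n s y z ξ ≤
          C * lastCoord y ^ b * lastCoord ξ ^ b * z ^ (2 * s) *
            (‖y - ξ‖ ^ 2 + z ^ 2) ^ (-((n : ℝ) + 2 * s + 2 * b) / 2) :=
  stmt3_general n hn s hs0
end

section
/- Let n ≥ 2 be an integer, s ∈ (0,1), r₀ > 0, δ ∈ (0, r₀), M > 0, L > 0 and K > 0. Let w₀ : (0,∞)³ → ℝ be continuously differentiable in the variables (τ, y_n, z) and assume that for all τ, y_n > 0: ∫_0^∞ z^{1−2s} ( (∂_τ w₀)² + (∂_{y_n} w₀)² + (∂_z w₀)² )(τ, y_n, z) dz ≤ M / (1 + (τ² + y_n²)^{(2n−2s+2)/2}). Let f : (0, r₀] → ℝ be measurable with |f(τ)| ≤ L for all τ ∈ (0, r₀]. Let η : [0,∞) → [0,1] be smooth with η ≡ 1 on [0, δ/2], η ≡ 0 on [δ, ∞) and |η'| ≤ K/δ. For ε > 0 define Λ(ε) := ε^{−1} ∫_0^∞ ∫_0^∞ ∫_0^∞ z^{1−2s} [ −2 ∂_τ( η(ε (τ² +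 y_n²)^{1/2})² ) (∂_τ w₀ · ∂_{y_n} w₀)(τ, y_n, z) + ∂_{y_n}( η(ε (τ² + y_n²)^{1/2})² ) ( (∂_τ w₀)² − (∂_{y_n} w₀)² + (∂_z w₀)² )(τ, y_n, z) ] · τ^{n−2} f(ε τ) dz dy_n dτ. Then there is a constant C = C(n, s, δ, M, L, K) such that |Λ(ε)| ≤ C ε^{n−2s+2} for every ε ∈ (0, 1). -/
open MeasureTheory Real Set ENNReal

/-- Partial derivative of `w₀` in the first variable `τ`. -/
noncomputable def dTau (w₀ : ℝ → ℝ → ℝ → ℝ) (τ y z : ℝ) : ℝ :=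
  deriv (fun t => w₀ t y z) τ

/-- Partial derivative of `w₀` in the second variable `y_n`. -/
noncomputable def dYn (w₀ : ℝ → ℝ → ℝ → ℝ) (τ y z : ℝ) : ℝ :=
  deriv (fun t => w₀ τ t z) y

/-- Partial derivative of `w₀` in the third variable `z`. -/
noncomputable def dZ (w₀ : ℝ → ℝ → ℝ → ℝ) (τ y z : ℝ) : ℝ :=
  deriv (fun t => w₀ τ y t) z

section Aux

theorem aux_eta_deriv_zero (δ : ℝ) (η : ℝ → ℝ) (hη : ContDiff ℝ (⊤ : ℕ∞) η)
    (hη1 : ∀ t ≤ δ / 2, η t = 1) (hη0 : ∀ t ≥ δ, η t = 0) :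
    ∀ t : ℝ, t ≤ δ / 2 ∨ δ ≤ t → deriv η t = 0 := by
  have hηd : Differentiable ℝ η := hη.differentiable (by simp)
  intro t ht
  rcases ht with ht | ht
  · have h1 : HasDerivWithinAt η 0 (Iic (δ/2)) t :=
      (hasDerivWithinAt_const t _ (1:ℝ)).congr (fun x hx => hη1 x hx) (hη1 t ht)
    have h2 : HasDerivWithinAt η (deriv η t) (Iic (δ/2)) t :=
      (hηd t).hasDerivAt.hasDerivWithinAt
    have hu := uniqueDiffOn_Iic (δ/2) t ht
    rw [← h2.derivWithin hu, h1.derivWithin hu]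
  · have h1 : HasDerivWithinAt η 0 (Ici δ) t :=
      (hasDerivWithinAt_const t _ (0:ℝ)).congr (fun x hx => hη0 x hx) (hη0 t ht)
    have h2 : HasDerivWithinAt η (deriv η t) (Ici δ) t :=
      (hηd t).hasDerivAt.hasDerivWithinAt
    have hu := uniqueDiffOn_Ici δ t ht
    rw [← h2.derivWithin hu, h1.derivWithin hu]

theorem aux_comp_deriv (ε : ℝ) (η : ℝ → ℝ) (hη : ContDiff ℝ (⊤ : ℕ∞) η) (a b : ℝ)
    (ha : 0 < a) (hb : 0 < b) :
    HasDerivAt (fun t => η (ε * Real.sqrt (t^2 + b^2)) ^ 2)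
      (2 * η (ε * Real.sqrt (a^2+b^2)) * deriv η (ε * Real.sqrt (a^2+b^2)) *
        (ε * (a / Real.sqrt (a^2+b^2)))) a := by
  have hηd : Differentiable ℝ η := hη.differentiable (by simp)
  have hX : (0:ℝ) < a^2 + b^2 := by positivity
  have h0 : HasDerivAt (fun t : ℝ => t^2 + b^2) (2*a) a := by
    simpa using (hasDerivAt_pow 2 a).add_const (b^2)
  have h1 : HasDerivAt (fun t : ℝ => Real.sqrt (t^2 + b^2))
      (1 / (2 * Real.sqrt (a^2+b^2)) * (2*a)) a :=
    (Real.hasDerivAt_sqrt hX.ne').comp a h0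
  have h2 := h1.const_mul ε
  have h3 := ((hηd _).hasDerivAt.comp a h2)
  have h4 : HasDerivAt (fun t => η (ε * Real.sqrt (t^2 + b^2)) ^ 2)
      ((2:ℕ) * η (ε * Real.sqrt (a^2+b^2)) ^ (2-1) * (deriv η (ε * Real.sqrt (a^2+b^2)) *
        (ε * (1 / (2 * Real.sqrt (a^2+b^2)) * (2*a))))) a := h3.pow 2
  convert h4 using 1
  have hs : Real.sqrt (a^2+b^2) ≠ 0 := by positivity
  field_simp
  ring

theorem aux_S_cont (w₀ : ℝ → ℝ → ℝ → ℝ)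
    (hw : ContDiffOn ℝ 1 (fun p : ℝ × ℝ × ℝ => w₀ p.1 p.2.1 p.2.2)
      (Ioi (0 : ℝ) ×ˢ Ioi (0 : ℝ) ×ˢ Ioi (0 : ℝ))) :
    ContinuousOn (fun p : ℝ × ℝ × ℝ =>
      dTau w₀ p.1 p.2.1 p.2.2 ^ 2 + dYn w₀ p.1 p.2.1 p.2.2 ^ 2 + dZ w₀ p.1 p.2.1 p.2.2 ^ 2)
      (Ioi (0 : ℝ) ×ˢ Ioi (0 : ℝ) ×ˢ Ioi (0 : ℝ)) := by
  set W : ℝ × ℝ × ℝ → ℝ := fun p => w₀ p.1 p.2.1 p.2.2 with hW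
  set U : Set (ℝ × ℝ × ℝ) := Ioi (0 : ℝ) ×ˢ Ioi (0 : ℝ) ×ˢ Ioi (0 : ℝ) with hU
  have hUo : IsOpen U := (isOpen_Ioi).prod ((isOpen_Ioi).prod isOpen_Ioi)
  have hfc : ContinuousOn (fun p => fderiv ℝ W p) U :=
    hw.continuousOn_fderiv_of_isOpen hUo le_rfl
  have hda : ∀ p ∈ U, HasFDerivAt W (fderiv ℝ W p) p := fun p hp =>
    ((hw.contDiffAt (hUo.mem_nhds hp)).differentiableAt one_ne_zero).hasFDerivAt
  have hT : ∀ p ∈ U, dTau w₀ p.1 p.2.1 p.2.2 = fderiv ℝ W p (1, 0, 0) := by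
    rintro ⟨a, b, c⟩ hp
    have hcurve : HasDerivAt (fun t : ℝ => (t, b, c)) ((1:ℝ), (0:ℝ), (0:ℝ)) a :=
      (hasDerivAt_id a).prodMk ((hasDerivAt_const a b).prodMk (hasDerivAt_const a c))
    exact ((hda _ hp).comp_hasDerivAt a hcurve).deriv
  have hY : ∀ p ∈ U, dYn w₀ p.1 p.2.1 p.2.2 = fderiv ℝ W p (0, 1, 0) := by
    rintro ⟨a, b, c⟩ hp
    have hcurve : HasDerivAt (fun t : ℝ => (a, t, c)) ((0:ℝ), (1:ℝ), (0:ℝ)) b :=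
      (hasDerivAt_const b a).prodMk ((hasDerivAt_id b).prodMk (hasDerivAt_const b c))
    exact ((hda _ hp).comp_hasDerivAt b hcurve).deriv
  have hZ : ∀ p ∈ U, dZ w₀ p.1 p.2.1 p.2.2 = fderiv ℝ W p (0, 0, 1) := by
    rintro ⟨a, b, c⟩ hp
    have hcurve : HasDerivAt (fun t : ℝ => (a, b, t)) ((0:ℝ), (0:ℝ), (1:ℝ)) c :=
      (hasDerivAt_const c a).prodMk ((hasDerivAt_const c b).prodMk (hasDerivAt_id c))
    exact ((hda _ hp).comp_hasDerivAt c hcurve).deriv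
  have cT : ∀ v : ℝ × ℝ × ℝ, ContinuousOn (fun p => fderiv ℝ W p v) U := fun v =>
    (ContinuousLinearMap.apply ℝ ℝ v).continuous.comp_continuousOn hfc
  refine ContinuousOn.add (ContinuousOn.add ?_ ?_) ?_
  · exact (ContinuousOn.pow ((cT (1,0,0)).congr hT) 2)
  · exact (ContinuousOn.pow ((cT (0,1,0)).congr hY) 2)
  · exact (ContinuousOn.pow ((cT (0,0,1)).congr hZ) 2)

theorem aux_zint (s B : ℝ) (S : ℝ → ℝ) (hScont : ContinuousOn S (Ioi (0:ℝ)))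
    (hSnn : ∀ z, 0 ≤ S z) (hB : 0 ≤ B)
    (hen : (∫⁻ z in Ioi (0 : ℝ), ENNReal.ofReal (z ^ (1 - 2 * s) * S z)) ≤ ENNReal.ofReal B) :
    IntegrableOn (fun z => z ^ (1 - 2*s) * S z) (Ioi (0:ℝ)) ∧
      (∫ z in Ioi (0:ℝ), z ^ (1 - 2*s) * S z) ≤ B := by
  have hcont : ContinuousOn (fun z => z ^ (1 - 2*s) * S z) (Ioi (0:ℝ)) :=
    (continuousOn_id.rpow_const (fun z hz => Or.inl (ne_of_gt hz))).mul hScont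
  have haes : AEStronglyMeasurable (fun z => z ^ (1 - 2*s) * S z)
      (volume.restrict (Ioi (0:ℝ))) := hcont.aestronglyMeasurable measurableSet_Ioi
  have hnn : ∀ᵐ z ∂(volume.restrict (Ioi (0:ℝ))), 0 ≤ z ^ (1 - 2*s) * S z := by
    filter_upwards [self_mem_ae_restrict (measurableSet_Ioi : MeasurableSet (Ioi (0:ℝ)))]
      with z hz
    exact mul_nonneg (Real.rpow_nonneg (le_of_lt hz) _) (hSnn z)
  have hfin : HasFiniteIntegral (fun z => z ^ (1 - 2*s) * S z)
      (volume.restrict (Ioi (0:ℝ))) := by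
    rw [hasFiniteIntegral_iff_norm]
    calc ∫⁻ z, ENNReal.ofReal ‖z ^ (1 - 2*s) * S z‖ ∂(volume.restrict (Ioi (0:ℝ)))
        = ∫⁻ z in Ioi (0:ℝ), ENNReal.ofReal (z ^ (1 - 2*s) * S z) := by
          refine lintegral_congr_ae ?_
          filter_upwards [hnn] with z hz
          rw [Real.norm_eq_abs, abs_of_nonneg hz]
      _ ≤ ENNReal.ofReal B := hen
      _ < ⊤ := ofReal_lt_top
  refine ⟨⟨haes, hfin⟩, ?_⟩
  rw [integral_eq_lintegral_of_nonneg_ae hnn haes]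
  exact ENNReal.toReal_le_of_le_ofReal hB hen

theorem aux_ind (c b : ℝ) (hc : 0 ≤ c) (hb : 0 ≤ b) (h : ℝ → ℝ)
    (hbd : ∀ y ∈ Ioi (0:ℝ), |h y| ≤ (Icc (0:ℝ) b).indicator (fun _ => c) y) :
    |∫ y in Ioi (0:ℝ), h y| ≤ c * b := by
  have hgint : Integrable ((Icc (0:ℝ) b).indicator (fun _ => c))
      (volume.restrict (Ioi (0:ℝ))) := by
    refine Integrable.restrict ?_
    refine IntegrableOn.integrable_indicator ?_ measurableSet_Icc
    exact integrableOn_const (by simp [Real.volume_Icc])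
  have h1 : ‖∫ y in Ioi (0:ℝ), h y‖ ≤
      ∫ y in Ioi (0:ℝ), (Icc (0:ℝ) b).indicator (fun _ => c) y := by
    refine norm_integral_le_of_norm_le hgint ?_
    filter_upwards [self_mem_ae_restrict (measurableSet_Ioi : MeasurableSet (Ioi (0:ℝ)))]
      with y hy
    simpa [Real.norm_eq_abs] using hbd y hy
  rw [Real.norm_eq_abs] at h1
  refine h1.trans ?_
  rw [integral_indicator measurableSet_Icc]
  rw [Measure.restrict_restrict measurableSet_Icc, setIntegral_const]
  have hvol : (volume (Icc (0:ℝ) b ∩ Ioi 0)).toReal ≤ b := by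
    refine le_trans (ENNReal.toReal_mono (by simp [Real.volume_Icc])
      (measure_mono inter_subset_left)) ?_
    simp [Real.volume_Icc, ENNReal.toReal_ofReal hb]
  calc (volume (Icc (0:ℝ) b ∩ Ioi 0)).toReal • c ≤ b * c := by
        rw [smul_eq_mul]; exact mul_le_mul_of_nonneg_right hvol hc
    _ = c * b := by ring

theorem aux_alg (n : ℕ) (hn : 2 ≤ n) (s K L M δ ε : ℝ) (hδ : 0 < δ) (hε : 0 < ε) :
    ε⁻¹ * ((4*K*ε/δ) * ((δ/ε)^(n-2) * L) * (M * (2*ε/δ)^(2*(n:ℝ)-2*s+2)) * (δ/ε) * (δ/ε))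
      = ((4*K/δ) * (δ^(n-2) * L) * (M * (2/δ)^(2*(n:ℝ)-2*s+2)) * δ^2) * ε^((n:ℝ)-2*s+2) := by
  have h1 : (2*ε/δ) = (2/δ) * ε := by ring
  rw [h1, Real.mul_rpow (by positivity) hε.le]
  have hp : ε ^ (2*(n:ℝ)-2*s+2) = ε^((n:ℝ)-2*s+2) * ε^(n-2) * ε^2 := by
    rw [← Real.rpow_natCast ε (n-2), ← Real.rpow_natCast ε 2,
      ← Real.rpow_add hε, ← Real.rpow_add hε]
    congr 1
    have h2 : ((n-2 : ℕ) : ℝ) = (n:ℝ) - 2 := by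
      rw [Nat.cast_sub hn]; norm_num
    rw [h2]; push_cast; ring
  rw [hp]
  have hεm : (0:ℝ) < ε^(n-2) := by positivity
  simp only [div_pow]
  field_simp


theorem aux_ptbd (Dt Dy T Y Z c : ℝ) (hc : 0 ≤ c) (hDt : |Dt| ≤ c) (hDy : |Dy| ≤ c) :
    |(-2) * Dt * (T * Y) + Dy * (T^2 - Y^2 + Z^2)| ≤ (2*c) * (T^2 + Y^2 + Z^2) := by
  have habs : |(-2) * Dt * (T * Y) + Dy * (T^2 - Y^2 + Z^2)| ≤
      |(-2) * Dt * (T * Y)| + |Dy * (T^2 - Y^2 + Z^2)| := abs_add_le _ _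
  have b1 : |(-2) * Dt * (T * Y)| = |Dt| * (2 * |T * Y|) := by
    rw [abs_mul, abs_mul]; norm_num; ring
  have h2ab : 2 * |T * Y| ≤ T^2 + Y^2 := by
    rw [abs_mul]
    nlinarith [sq_nonneg (|T| - |Y|), sq_abs T, sq_abs Y, abs_nonneg T, abs_nonneg Y]
  have b2 : |Dy * (T^2 - Y^2 + Z^2)| = |Dy| * |T^2 - Y^2 + Z^2| := abs_mul _ _
  have h3 : |T^2 - Y^2 + Z^2| ≤ T^2 + Y^2 + Z^2 := by
    rw [abs_le]; constructor <;> nlinarith [sq_nonneg T, sq_nonneg Y, sq_nonneg Z]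
  have k1 : |Dt| * (2 * |T * Y|) ≤ c * (T^2 + Y^2) :=
    mul_le_mul hDt h2ab (by positivity) hc
  have k2 : |Dy| * |T^2 - Y^2 + Z^2| ≤ c * (T^2 + Y^2 + Z^2) :=
    mul_le_mul hDy h3 (abs_nonneg _) hc
  have k3 : (0:ℝ) ≤ c * Z^2 := mul_nonneg hc (sq_nonneg Z)
  nlinarith [habs, b1, b2, k1, k2, k3]

theorem aux_pointwise (u A m fv c S L : ℝ) (hu : 0 ≤ u) (hm : 0 ≤ m) (hS : 0 ≤ S)
    (hL : 0 ≤ L) (hc : 0 ≤ c) (hA : |A| ≤ c * S) (hf : |fv| ≤ L) :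
    |u * A * m * fv| ≤ (c * (m * L)) * (u * S) := by
  calc |u * A * m * fv| = u * |A| * m * |fv| := by
        rw [abs_mul, abs_mul, abs_mul, abs_of_nonneg hu, abs_of_nonneg hm]
    _ ≤ u * (c * S) * m * L := by
        refine mul_le_mul ?_ hf (abs_nonneg _) ?_
        · exact mul_le_mul_of_nonneg_right (mul_le_mul_of_nonneg_left hA hu) hm
        · positivity
    _ = (c * (m * L)) * (u * S) := by ring

end Aux

set_option maxHeartbeats 2000000 in
theorem stmt18 (n : ℕ) (hn : 2 ≤ n) (s : ℝ) (hs0 : 0 < s) (hs1 : s < 1)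
    (r₀ δ M L K : ℝ) (hr₀ : 0 < r₀) (hδ : δ ∈ Ioo 0 r₀)
    (hM : 0 < M) (hL : 0 < L) (hK : 0 < K)
    (w₀ : ℝ → ℝ → ℝ → ℝ)
    (hw : ContDiffOn ℝ 1 (fun p : ℝ × ℝ × ℝ => w₀ p.1 p.2.1 p.2.2)
      (Ioi (0 : ℝ) ×ˢ Ioi (0 : ℝ) ×ˢ Ioi (0 : ℝ)))
    (henergy : ∀ τ y : ℝ, 0 < τ → 0 < y →
      (∫⁻ z in Ioi (0 : ℝ), ENNReal.ofReal (z ^ (1 - 2 * s) *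
          (dTau w₀ τ y z ^ 2 + dYn w₀ τ y z ^ 2 + dZ w₀ τ y z ^ 2))) ≤
        ENNReal.ofReal (M / (1 + (τ ^ 2 + y ^ 2) ^ ((2 * (n : ℝ) - 2 * s + 2) / 2))))
    (f : ℝ → ℝ) (hfmeas : Measurable f) (hf : ∀ τ ∈ Ioc (0 : ℝ) r₀, |f τ| ≤ L)
    (η : ℝ → ℝ) (hη : ContDiff ℝ (⊤ : ℕ∞) η) (hη01 : ∀ t, η t ∈ Icc (0 : ℝ) 1)
    (hη1 : ∀ t ≤ δ / 2, η t = 1) (hη0 : ∀ t ≥ δ, η t = 0)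
    (hη' : ∀ t, |deriv η t| ≤ K / δ) :
    ∃ C > (0 : ℝ), ∀ ε ∈ Ioo (0 : ℝ) 1,
      |ε⁻¹ * ∫ τ in Ioi (0 : ℝ), ∫ y in Ioi (0 : ℝ), ∫ z in Ioi (0 : ℝ),
          z ^ (1 - 2 * s) *
            (-2 * deriv (fun t => η (ε * Real.sqrt (t ^ 2 + y ^ 2)) ^ 2) τ *
                (dTau w₀ τ y z * dYn w₀ τ y z) +
              deriv (fun t => η (ε * Real.sqrt (τ ^ 2 + t ^ 2)) ^ 2) y *
                (dTau w₀ τ y z ^ 2 - dYn w₀ τ y z ^ 2 + dZ w₀ τ y z ^ 2)) *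
            τ ^ (n - 2) * f (ε * τ)| ≤
        C * ε ^ ((n : ℝ) - 2 * s + 2) := by
  obtain ⟨hδ0, hδr⟩ := hδ
  have hη'z := aux_eta_deriv_zero δ η hη hη1 hη0
  have hScont := aux_S_cont w₀ hw
  refine ⟨(4*K/δ) * (δ^(n-2) * L) * (M * (2/δ)^(2*(n:ℝ)-2*s+2)) * δ^2, by positivity, ?_⟩
  rintro ε ⟨hε0, hε1⟩
  set cε := (4*K*ε/δ) * ((δ/ε)^(n-2) * L) * (M * (2*ε/δ)^(2*(n:ℝ)-2*s+2)) with hcε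
  have hcε0 : 0 ≤ cε := by positivity
  have hδε : 0 ≤ δ/ε := by positivity
  -- derivative formulas
  have hDt_eq : ∀ a b : ℝ, 0 < a → 0 < b →
      deriv (fun t => η (ε * Real.sqrt (t^2 + b^2)) ^ 2) a =
        2 * η (ε * Real.sqrt (a^2+b^2)) * deriv η (ε * Real.sqrt (a^2+b^2)) *
          (ε * (a / Real.sqrt (a^2+b^2))) := fun a b ha hb =>
    (aux_comp_deriv ε η hη a b ha hb).deriv
  have hDy_eq : ∀ a b : ℝ, 0 < a → 0 < b →
      deriv (fun t => η (ε * Real.sqrt (a^2 + t^2)) ^ 2) b =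
        2 * η (ε * Real.sqrt (a^2+b^2)) * deriv η (ε * Real.sqrt (a^2+b^2)) *
          (ε * (b / Real.sqrt (a^2+b^2))) := by
    intro a b ha hb
    have he : (fun t => η (ε * Real.sqrt (a^2 + t^2)) ^ 2)
        = (fun t => η (ε * Real.sqrt (t^2 + a^2)) ^ 2) := by
      funext t; rw [add_comm]
    rw [he, (aux_comp_deriv ε η hη b a hb ha).deriv, add_comm (b^2) (a^2)]
  -- basic square-root facts
  have hsq : ∀ a b : ℝ, 0 < a → 0 < b →
      (0 < Real.sqrt (a^2+b^2) ∧ a ≤ Real.sqrt (a^2+b^2) ∧ b ≤ Real.sqrt (a^2+b^2)) := by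
    intro a b ha hb
    have hX : (0:ℝ) < a^2+b^2 := by positivity
    have hr := Real.sqrt_pos.mpr hX
    have hr2 := Real.sq_sqrt hX.le
    refine ⟨hr, ?_, ?_⟩ <;> nlinarith [Real.sqrt_nonneg (a^2+b^2)]
  -- bound for the composite derivatives
  have hc0 : (0:ℝ) ≤ 2*(K/δ)*ε :=
    mul_nonneg (mul_nonneg (by norm_num) (div_nonneg hK.le hδ0.le)) hε0.le
  have hDbd : ∀ a b : ℝ, 0 < a → 0 < b → ∀ x : ℝ, 0 ≤ x → x ≤ Real.sqrt (a^2+b^2) →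
      |2 * η (ε * Real.sqrt (a^2+b^2)) * deriv η (ε * Real.sqrt (a^2+b^2)) *
        (ε * (x / Real.sqrt (a^2+b^2)))| ≤ 2*(K/δ)*ε := by
    intro a b ha hb x hx hxr
    obtain ⟨hr, -, -⟩ := hsq a b ha hb
    set q := ε * Real.sqrt (a^2+b^2)
    have h1 : |η q| ≤ 1 := abs_le.2 ⟨by linarith [(hη01 q).1], (hη01 q).2⟩
    have h2 : |deriv η q| ≤ K/δ := hη' q
    have h3 : (0:ℝ) ≤ x / Real.sqrt (a^2+b^2) := div_nonneg hx hr.le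
    have h4 : x / Real.sqrt (a^2+b^2) ≤ 1 := (div_le_one hr).2 hxr
    have h5 : |ε * (x / Real.sqrt (a^2+b^2))| ≤ ε :=
      by rw [abs_of_nonneg (mul_nonneg hε0.le h3)]; nlinarith
    calc |2 * η q * deriv η q * (ε * (x / Real.sqrt (a^2+b^2)))|
        = 2 * |η q| * |deriv η q| * |ε * (x / Real.sqrt (a^2+b^2))| := by
          rw [abs_mul, abs_mul, abs_mul]; norm_num
      _ ≤ 2*(K/δ)*ε := by
          have m1 : |η q| * |deriv η q| ≤ 1 * (K/δ) :=
            mul_le_mul h1 h2 (abs_nonneg _) zero_le_one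
          have m2 : (|η q| * |deriv η q|) * |ε * (x / Real.sqrt (a^2+b^2))| ≤ (1*(K/δ)) * ε :=
            mul_le_mul m1 h5 (abs_nonneg _) (by rw [one_mul]; exact div_nonneg hK.le hδ0.le)
          linarith [m2]
  -- zero inner integral when outside the annulus
  have innerzero : ∀ a b : ℝ, 0 < a → 0 < b →
      (ε * Real.sqrt (a^2+b^2) ≤ δ/2 ∨ δ ≤ ε * Real.sqrt (a^2+b^2)) →
      (∫ z in Ioi (0:ℝ), z ^ (1 - 2 * s) *
          (-2 * deriv (fun t => η (ε * Real.sqrt (t ^ 2 + b ^ 2)) ^ 2) a *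
              (dTau w₀ a b z * dYn w₀ a b z) +
            deriv (fun t => η (ε * Real.sqrt (a ^ 2 + t ^ 2)) ^ 2) b *
              (dTau w₀ a b z ^ 2 - dYn w₀ a b z ^ 2 + dZ w₀ a b z ^ 2)) *
          a ^ (n - 2) * f (ε * a)) = 0 := by
    intro a b ha hb hq
    have hd0 : deriv η (ε * Real.sqrt (a^2+b^2)) = 0 := hη'z _ hq
    have e1 : deriv (fun t => η (ε * Real.sqrt (t ^ 2 + b ^ 2)) ^ 2) a = 0 := by
      rw [hDt_eq a b ha hb, hd0]; ring
    have e2 : deriv (fun t => η (ε * Real.sqrt (a ^ 2 + t ^ 2)) ^ 2) b = 0 := by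
      rw [hDy_eq a b ha hb, hd0]; ring
    rw [e1, e2]
    simp
  -- the inner bound with indicator
  have inner : ∀ a b : ℝ, 0 < a → 0 < b →
      |∫ z in Ioi (0:ℝ), z ^ (1 - 2 * s) *
          (-2 * deriv (fun t => η (ε * Real.sqrt (t ^ 2 + b ^ 2)) ^ 2) a *
              (dTau w₀ a b z * dYn w₀ a b z) +
            deriv (fun t => η (ε * Real.sqrt (a ^ 2 + t ^ 2)) ^ 2) b *
              (dTau w₀ a b z ^ 2 - dYn w₀ a b z ^ 2 + dZ w₀ a b z ^ 2)) *
          a ^ (n - 2) * f (ε * a)| ≤ (Icc (0:ℝ) (δ/ε)).indicator (fun _ => cε) b := by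
    intro a b ha hb
    have hind0 : (0:ℝ) ≤ (Icc (0:ℝ) (δ/ε)).indicator (fun _ => cε) b :=
      Set.indicator_nonneg (fun _ _ => hcε0) b
    rcases le_or_gt (ε * Real.sqrt (a^2+b^2)) (δ/2) with hcase | hcase
    · rw [innerzero a b ha hb (Or.inl hcase)]; simpa using hind0
    rcases le_or_gt δ (ε * Real.sqrt (a^2+b^2)) with hcase2 | hcase2
    · rw [innerzero a b ha hb (Or.inr hcase2)]; simpa using hind0
    -- main case : δ/2 < ε√X < δ
    obtain ⟨hr, haX, hbX⟩ := hsq a b ha hb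
    have hX : (0:ℝ) < a^2+b^2 := by positivity
    have haδ : a ≤ δ/ε := by
      rw [le_div_iff₀ hε0]
      calc a * ε = ε * a := by ring
        _ ≤ ε * Real.sqrt (a^2+b^2) := mul_le_mul_of_nonneg_left haX hε0.le
        _ ≤ δ := hcase2.le
    have hbδ : b ≤ δ/ε := by
      rw [le_div_iff₀ hε0]
      calc b * ε = ε * b := by ring
        _ ≤ ε * Real.sqrt (a^2+b^2) := mul_le_mul_of_nonneg_left hbX hε0.le
        _ ≤ δ := hcase2.le
    have hindb : (Icc (0:ℝ) (δ/ε)).indicator (fun _ => cε) b = cε := by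
      exact Set.indicator_of_mem (Set.mem_Icc.mpr ⟨hb.le, hbδ⟩) _
    rw [hindb]
    -- integrability of the dominating function
    have hScontz : ContinuousOn
        (fun z => dTau w₀ a b z ^ 2 + dYn w₀ a b z ^ 2 + dZ w₀ a b z ^ 2) (Ioi (0:ℝ)) := by
      have hm : Continuous (fun z : ℝ => ((a, b, z) : ℝ × ℝ × ℝ)) :=
        continuous_const.prodMk (continuous_const.prodMk continuous_id)
      have hmap : MapsTo (fun z : ℝ => ((a, b, z) : ℝ × ℝ × ℝ)) (Ioi (0:ℝ))
          (Ioi (0 : ℝ) ×ˢ Ioi (0 : ℝ) ×ˢ Ioi (0 : ℝ)) := fun z hz => ⟨ha, hb, hz⟩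
      exact hScont.comp hm.continuousOn hmap
    have hBnn : (0:ℝ) ≤ M / (1 + (a ^ 2 + b ^ 2) ^ ((2 * (n : ℝ) - 2 * s + 2) / 2)) := by
      positivity
    obtain ⟨hSint, hSle⟩ := aux_zint s _ _ hScontz (fun z => by positivity) hBnn
      (henergy a b ha hb)
    -- the pointwise bound
    have hfb : |f (ε * a)| ≤ L := by
      refine hf _ ⟨by positivity, ?_⟩
      calc ε * a ≤ ε * Real.sqrt (a^2+b^2) := mul_le_mul_of_nonneg_left haX hε0.le
        _ ≤ δ := hcase2.le
        _ ≤ r₀ := hδr.le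
    have hnorm : ∀ z ∈ Ioi (0:ℝ),
        ‖z ^ (1 - 2 * s) *
          (-2 * deriv (fun t => η (ε * Real.sqrt (t ^ 2 + b ^ 2)) ^ 2) a *
              (dTau w₀ a b z * dYn w₀ a b z) +
            deriv (fun t => η (ε * Real.sqrt (a ^ 2 + t ^ 2)) ^ 2) b *
              (dTau w₀ a b z ^ 2 - dYn w₀ a b z ^ 2 + dZ w₀ a b z ^ 2)) *
          a ^ (n - 2) * f (ε * a)‖ ≤
        (((2*(K/δ)*ε) * (2 * (a^(n-2) * L)))) *
          (z ^ (1 - 2*s) * (dTau w₀ a b z ^ 2 + dYn w₀ a b z ^ 2 + dZ w₀ a b z ^ 2)) := by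
      intro z hz
      have hDtb : |deriv (fun t => η (ε * Real.sqrt (t ^ 2 + b ^ 2)) ^ 2) a| ≤ 2*(K/δ)*ε := by
        rw [hDt_eq a b ha hb]; exact hDbd a b ha hb a ha.le haX
      have hDyb : |deriv (fun t => η (ε * Real.sqrt (a ^ 2 + t ^ 2)) ^ 2) b| ≤ 2*(K/δ)*ε := by
        rw [hDy_eq a b ha hb]; exact hDbd a b ha hb b hb.le hbX
      rw [Real.norm_eq_abs]
      have hres := aux_pointwise (z ^ (1-2*s))
        (-2 * deriv (fun t => η (ε * Real.sqrt (t ^ 2 + b ^ 2)) ^ 2) a *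
              (dTau w₀ a b z * dYn w₀ a b z) +
            deriv (fun t => η (ε * Real.sqrt (a ^ 2 + t ^ 2)) ^ 2) b *
              (dTau w₀ a b z ^ 2 - dYn w₀ a b z ^ 2 + dZ w₀ a b z ^ 2))
        (a^(n-2)) (f (ε * a)) (2 * (2*(K/δ)*ε))
        (dTau w₀ a b z ^ 2 + dYn w₀ a b z ^ 2 + dZ w₀ a b z ^ 2) L
        (Real.rpow_nonneg (le_of_lt hz) _) (pow_nonneg ha.le _)
        (add_nonneg (add_nonneg (sq_nonneg _) (sq_nonneg _)) (sq_nonneg _)) hL.le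
        (by linarith [hc0])
        (by
          have := aux_ptbd (deriv (fun t => η (ε * Real.sqrt (t ^ 2 + b ^ 2)) ^ 2) a)
            (deriv (fun t => η (ε * Real.sqrt (a ^ 2 + t ^ 2)) ^ 2) b)
            (dTau w₀ a b z) (dYn w₀ a b z) (dZ w₀ a b z) (2*(K/δ)*ε) hc0 hDtb hDyb
          calc |(-2) * deriv (fun t => η (ε * Real.sqrt (t ^ 2 + b ^ 2)) ^ 2) a *
                (dTau w₀ a b z * dYn w₀ a b z) +
              deriv (fun t => η (ε * Real.sqrt (a ^ 2 + t ^ 2)) ^ 2) b *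
                (dTau w₀ a b z ^ 2 - dYn w₀ a b z ^ 2 + dZ w₀ a b z ^ 2)|
              ≤ (2*(2*(K/δ)*ε)) * (dTau w₀ a b z ^ 2 + dYn w₀ a b z ^ 2 + dZ w₀ a b z ^ 2) :=
                this
            _ = (2*(2*(K/δ)*ε)) * (dTau w₀ a b z ^ 2 + dYn w₀ a b z ^ 2 + dZ w₀ a b z ^ 2) :=
                rfl)
        hfb
      calc |z ^ (1 - 2 * s) *
            (-2 * deriv (fun t => η (ε * Real.sqrt (t ^ 2 + b ^ 2)) ^ 2) a *
                (dTau w₀ a b z * dYn w₀ a b z) +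
              deriv (fun t => η (ε * Real.sqrt (a ^ 2 + t ^ 2)) ^ 2) b *
                (dTau w₀ a b z ^ 2 - dYn w₀ a b z ^ 2 + dZ w₀ a b z ^ 2)) *
            a ^ (n - 2) * f (ε * a)|
          ≤ ((2 * (2*(K/δ)*ε)) * (a^(n-2) * L)) *
            (z ^ (1 - 2*s) * (dTau w₀ a b z ^ 2 + dYn w₀ a b z ^ 2 + dZ w₀ a b z ^ 2)) := hres
        _ = (((2*(K/δ)*ε) * (2 * (a^(n-2) * L)))) *
            (z ^ (1 - 2*s) * (dTau w₀ a b z ^ 2 + dYn w₀ a b z ^ 2 + dZ w₀ a b z ^ 2)) := by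
            ring
    -- put it together
    have hgi : Integrable (fun z => (((2*(K/δ)*ε) * (2 * (a^(n-2) * L)))) *
        (z ^ (1 - 2*s) * (dTau w₀ a b z ^ 2 + dYn w₀ a b z ^ 2 + dZ w₀ a b z ^ 2)))
        (volume.restrict (Ioi (0:ℝ))) := hSint.const_mul _
    have hstep : |∫ z in Ioi (0:ℝ), z ^ (1 - 2 * s) *
          (-2 * deriv (fun t => η (ε * Real.sqrt (t ^ 2 + b ^ 2)) ^ 2) a *
              (dTau w₀ a b z * dYn w₀ a b z) +
            deriv (fun t => η (ε * Real.sqrt (a ^ 2 + t ^ 2)) ^ 2) b *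
              (dTau w₀ a b z ^ 2 - dYn w₀ a b z ^ 2 + dZ w₀ a b z ^ 2)) *
          a ^ (n - 2) * f (ε * a)| ≤
        ∫ z in Ioi (0:ℝ), (((2*(K/δ)*ε) * (2 * (a^(n-2) * L)))) *
          (z ^ (1 - 2*s) * (dTau w₀ a b z ^ 2 + dYn w₀ a b z ^ 2 + dZ w₀ a b z ^ 2)) := by
      rw [← Real.norm_eq_abs]
      refine norm_integral_le_of_norm_le hgi ?_
      filter_upwards [self_mem_ae_restrict (measurableSet_Ioi : MeasurableSet (Ioi (0:ℝ)))]
        with z hz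
      exact hnorm z hz
    refine hstep.trans ?_
    rw [integral_const_mul]
    have hcst0 : (0:ℝ) ≤ (2*(K/δ)*ε) * (2 * (a^(n-2) * L)) :=
      mul_nonneg hc0 (mul_nonneg (by norm_num)
        (mul_nonneg (pow_nonneg ha.le _) hL.le))
    -- the fraction bound
    have hfrac : M / (1 + (a ^ 2 + b ^ 2) ^ ((2 * (n : ℝ) - 2 * s + 2) / 2)) ≤
        M * (2*ε/δ) ^ (2*(n:ℝ)-2*s+2) := by
      set p : ℝ := 2*(n:ℝ)-2*s+2 with hp
      have hp0 : (0:ℝ) < p := by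
        have h2n : (2:ℝ) ≤ (n:ℝ) := by exact_mod_cast hn
        rw [hp]; nlinarith
      set A0 : ℝ := δ/(2*ε) with hA0def
      have hA0 : (0:ℝ) < A0 := by positivity
      have hXa : A0^2 ≤ a^2+b^2 := by
        have h6 : A0 < Real.sqrt (a^2+b^2) := by
          rw [hA0def, div_lt_iff₀ (by positivity)]
          nlinarith [hcase]
        nlinarith [Real.sq_sqrt hX.le, Real.sqrt_nonneg (a^2+b^2)]
      have h1 : A0 ^ p ≤ (a^2+b^2) ^ (p/2) := by
        have he : A0 ^ p = (A0^2) ^ (p/2) := by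
          rw [← Real.rpow_natCast A0 2, ← Real.rpow_mul hA0.le]
          congr 1; ring
        rw [he]
        exact Real.rpow_le_rpow (by positivity) hXa (by positivity)
      have h2 : M / (1 + (a^2+b^2) ^ (p/2)) ≤ M / A0 ^ p := by
        have hrp : (0:ℝ) < A0 ^ p := Real.rpow_pos_of_pos hA0 p
        have hle : A0 ^ p ≤ 1 + (a^2+b^2) ^ (p/2) := by linarith
        gcongr
      refine h2.trans (le_of_eq ?_)
      rw [div_eq_mul_inv, ← Real.inv_rpow hA0.le, hA0def, inv_div]
    have hmono : a^(n-2) ≤ (δ/ε)^(n-2) := pow_le_pow_left₀ ha.le haδ _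
    have hcc : (2*(K/δ)*ε) * (2 * (a^(n-2) * L)) ≤ 4*K*ε/δ * ((δ/ε)^(n-2) * L) := by
      have e : 4*K*ε/δ * ((δ/ε)^(n-2) * L) = (2*(K/δ)*ε) * (2 * ((δ/ε)^(n-2) * L)) := by
        ring
      rw [e]
      refine mul_le_mul_of_nonneg_left ?_ hc0
      refine mul_le_mul_of_nonneg_left ?_ (by norm_num)
      exact mul_le_mul_of_nonneg_right hmono hL.le
    have hrhs0 : (0:ℝ) ≤ 4*K*ε/δ * ((δ/ε)^(n-2) * L) := by
      refine mul_nonneg (div_nonneg (by nlinarith) hδ0.le)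
        (mul_nonneg (pow_nonneg hδε _) hL.le)
    calc ((2*(K/δ)*ε) * (2 * (a^(n-2) * L))) *
          ∫ z in Ioi (0:ℝ), z ^ (1 - 2*s) *
            (dTau w₀ a b z ^ 2 + dYn w₀ a b z ^ 2 + dZ w₀ a b z ^ 2)
        ≤ ((2*(K/δ)*ε) * (2 * (a^(n-2) * L))) *
            (M / (1 + (a ^ 2 + b ^ 2) ^ ((2 * (n : ℝ) - 2 * s + 2) / 2))) :=
          mul_le_mul_of_nonneg_left hSle hcst0
      _ ≤ (4*K*ε/δ * ((δ/ε)^(n-2) * L)) * (M * (2*ε/δ) ^ (2*(n:ℝ)-2*s+2)) :=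
          mul_le_mul hcc hfrac hBnn hrhs0
      _ = cε := by rw [hcε]
  -- y-level integration
  have level_y : ∀ a : ℝ, 0 < a →
      |∫ y in Ioi (0:ℝ), ∫ z in Ioi (0:ℝ),
          z ^ (1 - 2 * s) *
            (-2 * deriv (fun t => η (ε * Real.sqrt (t ^ 2 + y ^ 2)) ^ 2) a *
                (dTau w₀ a y z * dYn w₀ a y z) +
              deriv (fun t => η (ε * Real.sqrt (a ^ 2 + t ^ 2)) ^ 2) y *
                (dTau w₀ a y z ^ 2 - dYn w₀ a y z ^ 2 + dZ w₀ a y z ^ 2)) *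
            a ^ (n - 2) * f (ε * a)| ≤ cε * (δ/ε) := by
    intro a ha
    exact aux_ind cε (δ/ε) hcε0 hδε _ (fun b hb => inner a b ha hb)
  have level_y0 : ∀ a : ℝ, 0 < a → δ/ε ≤ a →
      (∫ y in Ioi (0:ℝ), ∫ z in Ioi (0:ℝ),
          z ^ (1 - 2 * s) *
            (-2 * deriv (fun t => η (ε * Real.sqrt (t ^ 2 + y ^ 2)) ^ 2) a *
                (dTau w₀ a y z * dYn w₀ a y z) +
              deriv (fun t => η (ε * Real.sqrt (a ^ 2 + t ^ 2)) ^ 2) y *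
                (dTau w₀ a y z ^ 2 - dYn w₀ a y z ^ 2 + dZ w₀ a y z ^ 2)) *
            a ^ (n - 2) * f (ε * a)) = 0 := by
    intro a ha haε
    have hz : ∀ b ∈ Ioi (0:ℝ), (∫ z in Ioi (0:ℝ),
        z ^ (1 - 2 * s) *
          (-2 * deriv (fun t => η (ε * Real.sqrt (t ^ 2 + b ^ 2)) ^ 2) a *
              (dTau w₀ a b z * dYn w₀ a b z) +
            deriv (fun t => η (ε * Real.sqrt (a ^ 2 + t ^ 2)) ^ 2) b *
              (dTau w₀ a b z ^ 2 - dYn w₀ a b z ^ 2 + dZ w₀ a b z ^ 2)) *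
          a ^ (n - 2) * f (ε * a)) = 0 := by
      intro b hb
      refine innerzero a b ha hb (Or.inr ?_)
      have haX : a ≤ Real.sqrt (a^2+b^2) := (hsq a b ha hb).2.1
      calc δ = ε * (δ/ε) := by field_simp
        _ ≤ ε * a := mul_le_mul_of_nonneg_left haε hε0.le
        _ ≤ ε * Real.sqrt (a^2+b^2) := mul_le_mul_of_nonneg_left haX hε0.le
    calc (∫ y in Ioi (0:ℝ), ∫ z in Ioi (0:ℝ),
          z ^ (1 - 2 * s) *
            (-2 * deriv (fun t => η (ε * Real.sqrt (t ^ 2 + y ^ 2)) ^ 2) a *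
                (dTau w₀ a y z * dYn w₀ a y z) +
              deriv (fun t => η (ε * Real.sqrt (a ^ 2 + t ^ 2)) ^ 2) y *
                (dTau w₀ a y z ^ 2 - dYn w₀ a y z ^ 2 + dZ w₀ a y z ^ 2)) *
            a ^ (n - 2) * f (ε * a))
        = ∫ _y in Ioi (0:ℝ), (0:ℝ) := setIntegral_congr_fun measurableSet_Ioi hz
      _ = 0 := by simp
  -- τ-level
  have level_τ : ∀ a ∈ Ioi (0:ℝ),
      |∫ y in Ioi (0:ℝ), ∫ z in Ioi (0:ℝ),
          z ^ (1 - 2 * s) *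
            (-2 * deriv (fun t => η (ε * Real.sqrt (t ^ 2 + y ^ 2)) ^ 2) a *
                (dTau w₀ a y z * dYn w₀ a y z) +
              deriv (fun t => η (ε * Real.sqrt (a ^ 2 + t ^ 2)) ^ 2) y *
                (dTau w₀ a y z ^ 2 - dYn w₀ a y z ^ 2 + dZ w₀ a y z ^ 2)) *
            a ^ (n - 2) * f (ε * a)| ≤
        (Icc (0:ℝ) (δ/ε)).indicator (fun _ => cε * (δ/ε)) a := by
    intro a ha
    rcases le_or_gt a (δ/ε) with hle | hgt
    · rw [Set.indicator_of_mem (Set.mem_Icc.mpr ⟨le_of_lt ha, hle⟩)]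
      exact level_y a ha
    · rw [level_y0 a ha hgt.le, Set.indicator_of_notMem
        (fun hmem => absurd (Set.mem_Icc.mp hmem).2 (not_le.mpr hgt))]
      simp
  have hfinal := aux_ind (cε * (δ/ε)) (δ/ε) (mul_nonneg hcε0 hδε) hδε _ level_τ
  rw [abs_mul, abs_of_nonneg (inv_nonneg.2 hε0.le)]
  calc ε⁻¹ * |∫ τ in Ioi (0:ℝ), ∫ y in Ioi (0:ℝ), ∫ z in Ioi (0:ℝ),
          z ^ (1 - 2 * s) *
            (-2 * deriv (fun t => η (ε * Real.sqrt (t ^ 2 + y ^ 2)) ^ 2) τ *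
                (dTau w₀ τ y z * dYn w₀ τ y z) +
              deriv (fun t => η (ε * Real.sqrt (τ ^ 2 + t ^ 2)) ^ 2) y *
                (dTau w₀ τ y z ^ 2 - dYn w₀ τ y z ^ 2 + dZ w₀ τ y z ^ 2)) *
            τ ^ (n - 2) * f (ε * τ)|
      ≤ ε⁻¹ * ((cε * (δ/ε)) * (δ/ε)) :=
        mul_le_mul_of_nonneg_left hfinal (inv_nonneg.2 hε0.le)
    _ = ε⁻¹ * ((4*K*ε/δ) * ((δ/ε)^(n-2) * L) * (M * (2*ε/δ)^(2*(n:ℝ)-2*s+2)) *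
          (δ/ε) * (δ/ε)) := by rw [hcε]
    _ = ((4*K/δ) * (δ^(n-2) * L) * (M * (2/δ)^(2*(n:ℝ)-2*s+2)) * δ^2) *
          ε^((n:ℝ)-2*s+2) := aux_alg n hn s K L M δ ε hδ0 hε0
end
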